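/- Localized weak bisimilarity is an equivalence relation on processes: the relation P ≈ Q, holding when there exist a localized weak bisimulation 𝓡 and E ⊆ |P|×|Q| with (P,E,Q) ∈ 𝓡, is reflexive, symmetric, and transitive. -/
import Mathlib


/-- A localized labelled transition system: processes carry a set of locations,
τ-transitions and visible multiset-labelled transitions carry residual functions
mapping the locations of the target back to locations of the source. -/
structure LLTS (Proc Loc Act : Type*) where
  loc : Proc → Set Loc
  tau : Proc → (Loc → Loc) → Proc → Prop
  vis : Proc → Multiset (Loc × Act) → (Loc → Loc) → Proc → Prop
  tau_res : ∀ {P l P'}, tau P l P' → ∀ x ∈ loc P', l x ∈ loc P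
  vis_res : ∀ {P Δ l P'}, vis P Δ l P' → ∀ x ∈ loc P', l x ∈ loc P
  vis_lbl : ∀ {P Δ l P'}, vis P Δ l P' → ∀ x ∈ Δ, x.1 ∈ loc P

/-- Weak internal transitions `P ⟹τ* P'`, composing the residual functions. -/
inductive LLTS.TauStar {Proc Loc Act : Type*} (S : LLTS Proc Loc Act) :
    Proc → (Loc → Loc) → Proc → Prop
  | refl (P : Proc) : S.TauStar P id P
  | step {P P' P'' : Proc} {l r : Loc → Loc} :
      S.tau P l P' → S.TauStar P' r P'' → S.TauStar P (l ∘ r) P''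

/-- `Corresponds Δ Δc c`: `c` pairs off the labels of `Δ` with those of the
corresponding multiset `Δc`, matched labels carrying the same action. -/
def Corresponds {Loc Act : Type*} (Δ Δc : Multiset (Loc × Act))
    (c : Multiset ((Loc × Act) × (Loc × Act))) : Prop :=
  c.map Prod.fst = Δ ∧ c.map Prod.snd = Δc ∧ ∀ x ∈ c, x.1.2 = x.2.2

/-- Transpose of a location relation. -/
def LocRel.transpose {Loc : Type*} (E : Set (Loc × Loc)) : Set (Loc × Loc) :=
  {x | (x.2, x.1) ∈ E}

/-- The matching conditions of localized weak bisimulation: every τ-transition of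
`P` is matched by a weak τ-sequence of `Q`, and every visible multiset transition
of `P` is matched by a corresponding weak transition of `Q`, with matching labels
at `E`-related locations, landing in `T` with residual-compatible location
relations. -/
def Matches {Proc Loc Act : Type*} (S : LLTS Proc Loc Act)
    (T : Set (Proc × Set (Loc × Loc) × Proc))
    (P : Proc) (E : Set (Loc × Loc)) (Q : Proc) : Prop :=
  (∀ l P', S.tau P l P' →
    ∃ r Q' E', S.TauStar Q r Q' ∧ (P', E', Q') ∈ T ∧
      ∀ p' q', (p', q') ∈ E' → (l p', r q') ∈ E) ∧
  (∀ Δ l P', S.vis P Δ l P' →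
    ∃ Δc c ρ ρ₁ ρ' Q₁ Q₁' Q' E',
      S.TauStar Q ρ Q₁ ∧ S.vis Q₁ Δc ρ₁ Q₁' ∧ S.TauStar Q₁' ρ' Q' ∧
      Corresponds Δ Δc c ∧
      (∀ x ∈ c, (x.1.1, ρ x.2.1) ∈ E) ∧
      (P', E', Q') ∈ T ∧
      ∀ p' q', (p', q') ∈ E' → (l p', ρ (ρ₁ (ρ' q'))) ∈ E)

/-- A localized weak bisimulation: a symmetric localized relation all of whose
triples satisfy the matching conditions. -/
def IsWeakBisim {Proc Loc Act : Type*} (S : LLTS Proc Loc Act)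
    (R : Set (Proc × Set (Loc × Loc) × Proc)) : Prop :=
  (∀ P E Q, (P, E, Q) ∈ R → (Q, LocRel.transpose E, P) ∈ R) ∧
  (∀ P E Q, (P, E, Q) ∈ R → Matches S R P E Q)

/-- Localized weak bisimilarity `P ≈ Q`. -/
def Bisimilar {Proc Loc Act : Type*} (S : LLTS Proc Loc Act) (P Q : Proc) : Prop :=
  ∃ R E, IsWeakBisim S R ∧ (P, E, Q) ∈ R

/-! ### Auxiliary material -/

/-- Composition of location relations. -/
def LComp {Loc : Type*} (F G : Set (Loc × Loc)) : Set (Loc × Loc) :=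
  {p | ∃ y, (p.1, y) ∈ F ∧ (y, p.2) ∈ G}

/-- Composition of localized relations. -/
def RComp {Proc Loc : Type*} (R₁ R₂ : Set (Proc × Set (Loc × Loc) × Proc)) :
    Set (Proc × Set (Loc × Loc) × Proc) :=
  {x | ∃ Q F G, (x.1, F, Q) ∈ R₁ ∧ (Q, G, x.2.2) ∈ R₂ ∧ x.2.1 = LComp F G}

lemma tauStar_trans {Proc Loc Act : Type*} {S : LLTS Proc Loc Act}
    {P P' P'' : Proc} {l r : Loc → Loc}
    (h : S.TauStar P l P') (h' : S.TauStar P' r P'') :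
    S.TauStar P (l ∘ r) P'' := by
  induction h with
  | refl P => exact h'
  | @step _ _ _ la ra t _ ih =>
    have : la ∘ ra ∘ r = (la ∘ ra) ∘ r := rfl
    rw [show (la ∘ ra) ∘ r = la ∘ (ra ∘ r) from rfl]
    exact LLTS.TauStar.step t (ih h')

lemma matches_mono {Proc Loc Act : Type*} {S : LLTS Proc Loc Act}
    {T T' : Set (Proc × Set (Loc × Loc) × Proc)} (hTT : T ⊆ T')
    {P E Q} (h : Matches S T P E Q) : Matches S T' P E Q := by
  obtain ⟨h1, h2⟩ := h
  constructor
  · intro l P' ht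
    obtain ⟨r, Q', E', hr, hm, hc⟩ := h1 l P' ht
    exact ⟨r, Q', E', hr, hTT hm, hc⟩
  · intro Δ l P' hv
    obtain ⟨Δc, c, ρ, ρ₁, ρ', Q₁, Q₁', Q', E', a1, a2, a3, a4, a5, a6, a7⟩ := h2 Δ l P' hv
    exact ⟨Δc, c, ρ, ρ₁, ρ', Q₁, Q₁', Q', E', a1, a2, a3, a4, a5, hTT a6, a7⟩

/-- A weak τ-sequence from `P` is matched by a weak τ-sequence from `Q`. -/
lemma tauStar_match {Proc Loc Act : Type*} {S : LLTS Proc Loc Act}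
    {R : Set (Proc × Set (Loc × Loc) × Proc)} (hR : IsWeakBisim S R)
    {P P' : Proc} {l : Loc → Loc} (h : S.TauStar P l P') :
    ∀ E Q, (P, E, Q) ∈ R →
      ∃ r Q' E', S.TauStar Q r Q' ∧ (P', E', Q') ∈ R ∧
        ∀ p' q', (p', q') ∈ E' → (l p', r q') ∈ E := by
  induction h with
  | refl P =>
    intro E Q hm
    exact ⟨id, Q, E, LLTS.TauStar.refl Q, hm, fun p' q' h => h⟩
  | step t _ ih =>
    intro E Q hm
    obtain ⟨r₀, Qm, Em, hr₀, hmem, hc₀⟩ := (hR.2 _ _ _ hm).1 _ _ t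
    obtain ⟨r₁, Q', E', hr₁, hmem', hc₁⟩ := ih Em Qm hmem
    exact ⟨r₀ ∘ r₁, Q', E', tauStar_trans hr₀ hr₁, hmem',
      fun p' q' h => hc₀ _ _ (hc₁ _ _ h)⟩

/-- Gluing of multiset correspondences. -/
lemma glue {α β γ : Type*} (c : Multiset (α × β)) :
    ∀ d : Multiset (β × γ), c.map Prod.snd = d.map Prod.fst →
    ∃ e : Multiset (α × γ), e.map Prod.fst = c.map Prod.fst ∧
      e.map Prod.snd = d.map Prod.snd ∧
      ∀ x ∈ e, ∃ y ∈ c, ∃ z ∈ d, x.1 = y.1 ∧ x.2 = z.2 ∧ y.2 = z.1 := by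
  induction c using Multiset.induction_on with
  | empty =>
    intro d h
    have hd : d = 0 := by
      have := h.symm
      simpa [Multiset.map_eq_zero] using this
    subst hd
    exact ⟨0, by simp, by simp, by simp⟩
  | cons a c ih =>
    intro d h
    have ha : a.2 ∈ d.map Prod.fst := by
      rw [← h]; simp
    obtain ⟨b, hb, hba⟩ := Multiset.mem_map.1 ha
    obtain ⟨d', rfl⟩ := Multiset.exists_cons_of_mem hb
    have h' : c.map Prod.snd = d'.map Prod.fst := by
      have : a.2 ::ₘ c.map Prod.snd = b.1 ::ₘ d'.map Prod.fst := by
        simpa using h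
      rw [hba] at this
      exact (Multiset.cons_inj_right _).mp this
    obtain ⟨e, he1, he2, he3⟩ := ih d' h'
    refine ⟨(a.1, b.2) ::ₘ e, by simp [he1], by simp [he2], ?_⟩
    intro x hx
    rcases Multiset.mem_cons.1 hx with rfl | hx
    · exact ⟨a, Multiset.mem_cons_self _ _, b, Multiset.mem_cons_self _ _, rfl, rfl, hba.symm⟩
    · obtain ⟨y, hy, z, hz, h1, h2, h3⟩ := he3 x hx
      exact ⟨y, Multiset.mem_cons_of_mem hy, z, Multiset.mem_cons_of_mem hz, h1, h2, h3⟩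

/-- Triples of a composition of bisimulations satisfy the matching conditions
into the composition. -/
lemma matches_comp {Proc Loc Act : Type*} {S : LLTS Proc Loc Act}
    {R₁ R₂ : Set (Proc × Set (Loc × Loc) × Proc)}
    (h₁ : IsWeakBisim S R₁) (h₂ : IsWeakBisim S R₂)
    {P E U} (hm : (P, E, U) ∈ RComp R₁ R₂) :
    Matches S (RComp R₁ R₂) P E U := by
  obtain ⟨Q, F, G, hPQ, hQU, rfl⟩ := hm
  constructor
  · -- τ case
    intro l P' ht
    obtain ⟨r, Qm, F', hr, hF', hcF⟩ := (h₁.2 _ _ _ hPQ).1 _ _ ht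
    obtain ⟨s, U', G', hs, hG', hcG⟩ := tauStar_match h₂ hr G U hQU
    refine ⟨s, U', LComp F' G', hs, ⟨Qm, F', G', hF', hG', rfl⟩, ?_⟩
    rintro p' u' ⟨q', hq1, hq2⟩
    exact ⟨r q', hcF _ _ hq1, hcG _ _ hq2⟩
  · -- visible case
    intro Δ l P' hv
    obtain ⟨Δc, c, ρ, ρ₁, ρ', Q₁, Q₁', Q', F', hρ, hvQ, hρ', hcor, hlbl, hF', hcF⟩ :=
      (h₁.2 _ _ _ hPQ).2 _ _ _ hv
    obtain ⟨σ, U₁, G₁, hσ, hG₁, hcG₁⟩ := tauStar_match h₂ hρ G U hQU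
    obtain ⟨Δd, d, σρ, σ₁, σ', U₂, U₂', U₃, G₂, hσρ, hvU, hσ', hcord, hlbld, hG₂, hcG₂⟩ :=
      (h₂.2 _ _ _ hG₁).2 _ _ _ hvQ
    obtain ⟨σ'', U', G₃, hσ'', hG₃, hcG₃⟩ := tauStar_match h₂ hρ' G₂ U₃ hG₂
    obtain ⟨e, he1, he2, he3⟩ := glue c d (by rw [hcor.2.1, hcord.1])
    refine ⟨Δd, e, σ ∘ σρ, σ₁, σ' ∘ σ'', U₂, U₂', U', LComp F' G₃,
      tauStar_trans hσ hσρ, hvU, tauStar_trans hσ' hσ'', ?_, ?_,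
      ⟨Q', F', G₃, hF', hG₃, rfl⟩, ?_⟩
    · refine ⟨by rw [he1, hcor.1], by rw [he2, hcord.2.1], ?_⟩
      intro x hx
      obtain ⟨y, hy, z, hz, hx1, hx2, hyz⟩ := he3 x hx
      rw [hx1, hx2, hcor.2.2 y hy, hyz, hcord.2.2 z hz]
    · intro x hx
      obtain ⟨y, hy, z, hz, hx1, hx2, hyz⟩ := he3 x hx
      refine ⟨ρ z.1.1, ?_, ?_⟩
      · rw [hx1]
        have := hlbl y hy
        rwa [hyz] at this
      · have := hcG₁ _ _ (hlbld z hz)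
        rw [hx2]
        exact this
    · rintro p' u' ⟨q', hq1, hq2⟩
      exact ⟨ρ (ρ₁ (ρ' q')), hcF _ _ hq1, hcG₁ _ _ (hcG₂ _ _ (hcG₃ _ _ hq2))⟩

lemma transpose_lcomp {Loc : Type*} (F G : Set (Loc × Loc)) :
    LocRel.transpose (LComp F G) = LComp (LocRel.transpose G) (LocRel.transpose F) := by
  ext ⟨x, y⟩
  constructor
  · rintro ⟨z, h1, h2⟩; exact ⟨z, h2, h1⟩
  · rintro ⟨z, h1, h2⟩; exact ⟨z, h2, h1⟩

/-- The union of the two compositions is a weak bisimulation. -/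
lemma comp_isWeakBisim {Proc Loc Act : Type*} {S : LLTS Proc Loc Act}
    {R₁ R₂ : Set (Proc × Set (Loc × Loc) × Proc)}
    (h₁ : IsWeakBisim S R₁) (h₂ : IsWeakBisim S R₂) :
    IsWeakBisim S (RComp R₁ R₂ ∪ RComp R₂ R₁) := by
  constructor
  · rintro P E Q (⟨M, F, G, hF, hG, rfl⟩ | ⟨M, F, G, hF, hG, rfl⟩)
    · exact Or.inr ⟨M, LocRel.transpose G, LocRel.transpose F,
        h₂.1 _ _ _ hG, h₁.1 _ _ _ hF, transpose_lcomp F G⟩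
    · exact Or.inl ⟨M, LocRel.transpose G, LocRel.transpose F,
        h₁.1 _ _ _ hG, h₂.1 _ _ _ hF, transpose_lcomp F G⟩
  · rintro P E Q (h | h)
    · exact matches_mono Set.subset_union_left (matches_comp h₁ h₂ h)
    · exact matches_mono Set.subset_union_right (matches_comp h₂ h₁ h)

/-- Localized weak bisimilarity is an equivalence relation on processes. -/
theorem stmt10 {Proc Loc Act : Type*} (S : LLTS Proc Loc Act) :
    Equivalence (Bisimilar S) := by
  constructor
  · -- reflexivity
    intro P
    refine ⟨{x | x.1 = x.2.2 ∧ x.2.1 = {p | p.1 = p.2}}, {p | p.1 = p.2}, ⟨?_, ?_⟩, rfl, rfl⟩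
    · rintro P E Q ⟨h1, h2⟩
      dsimp only at h1 h2
      subst h1; subst h2
      refine ⟨rfl, ?_⟩
      ext ⟨x, y⟩
      exact ⟨fun h => h.symm, fun h => h.symm⟩
    · rintro P E Q ⟨h1, h2⟩
      dsimp only at h1 h2
      subst h1; subst h2
      constructor
      · intro l P' ht
        refine ⟨l ∘ id, P', {p | p.1 = p.2}, LLTS.TauStar.step ht (LLTS.TauStar.refl P'),
          ⟨rfl, rfl⟩, ?_⟩
        rintro p' q' (h : p' = q'); subst h; rfl
      · intro Δ l P' hv
        refine ⟨Δ, Δ.map (fun x => (x, x)), id, l, id, P, P', P', {p | p.1 = p.2},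
          LLTS.TauStar.refl P, hv, LLTS.TauStar.refl P', ?_, ?_, ⟨rfl, rfl⟩, ?_⟩
        · refine ⟨by simp, by simp, ?_⟩
          intro x hx
          obtain ⟨y, _, rfl⟩ := Multiset.mem_map.1 hx
          rfl
        · intro x hx
          obtain ⟨y, _, rfl⟩ := Multiset.mem_map.1 hx
          rfl
        · rintro p' q' (h : p' = q'); subst h; rfl
  · -- symmetry
    rintro P Q ⟨R, E, hR, hm⟩
    exact ⟨R, LocRel.transpose E, hR, hR.1 _ _ _ hm⟩
  · -- transitivity
    rintro P Q U ⟨R₁, F, h₁, hm₁⟩ ⟨R₂, G, h₂, hm₂⟩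
    exact ⟨RComp R₁ R₂ ∪ RComp R₂ R₁, LComp F G, comp_isWeakBisim h₁ h₂,
      Or.inl ⟨Q, F, G, hm₁, hm₂, rfl⟩⟩
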